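/- Let φ : ℚ ⊗ E → ℚ ⊗ E' be an isomorphism between the rationalizations of two modules E, E' over a p-torsion-free ring, such that Hom(E, E') = p^n · W for a complete DVR W with uniformizer p and some integer n. Then φ restricts to an isomorphism p^n E ≅ E'. Abstract form: if Hom(E,E') is free of rank 1 over W generated in 'degree' p^n relative to φ, then the rescaled map p^{-n}·(restriction of φ) : E → E' is invertible. -/

import Mathlib

/-!
`ψ` is injective since `E` is `p`-torsion-free, and since `E'` is finitely generated its cokernel
is killed by a single power `p ^ N`. Multiplication by `p ^ N` embeds `E'` into `ψ(E) ≅ E`, so the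
free modules `E` and `E'` have the same rank and are isomorphic. As `Hom(E, E')` is generated by
`ψ`, that isomorphism is `a • ψ` for some `a : W`, which forces `ψ` to be onto.
-/

open Module

theorem IsDiscreteValuationRing.isTorsionFree_of_isSMulRegular {W M : Type*} [CommRing W]
    [IsDomain W] [IsDiscreteValuationRing W] [AddCommGroup M] [Module W M] {p : W}
    (hp : Irreducible p) (hpM : IsSMulRegular M p) : IsTorsionFree W M where
  isSMulRegular r hr := by
    obtain ⟨n, u, rfl⟩ := eq_unit_mul_pow_irreducible hr.ne_zero hp
    exact u.isSMulRegular M |>.mul (hpM.pow n)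

theorem Module.IsTorsion'.exists_smul_eq_zero {R M : Type*} [CommSemiring R] [AddCommMonoid M]
    [Module R M] [Module.Finite R M] {S : Submonoid R} (hM : IsTorsion' M S) :
    ∃ a ∈ S, ∀ x : M, a • x = 0 := by
  classical
  obtain ⟨s, hs⟩ := Module.Finite.fg_top (R := R) (M := M)
  have ha : ∏ x ∈ s, ((@hM x).choose : R) ∈ (⊤ : Submodule R M).annihilator := by
    rw [← hs, Submodule.mem_annihilator_span]
    intro x
    rw [← Finset.prod_erase_mul _ _ x.prop, mul_smul]
    exact (congrArg _ (@hM x).choose_spec).trans (smul_zero _)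
  exact ⟨_, prod_mem fun x _ ↦ (@hM x).choose.prop,
    fun y ↦ Submodule.mem_annihilator.mp ha y Submodule.mem_top⟩

theorem LinearMap.finrank_eq_of_smul_mem_range {R M M' : Type*} [CommRing R]
    [StrongRankCondition R] [AddCommGroup M] [Module R M] [AddCommGroup M'] [Module R M']
    [Module.Finite R M] [Module.Finite R M'] (f : M →ₗ[R] M') (hf : Function.Injective f)
    {a : R} (ha : IsSMulRegular M' a) (h : ∀ y : M', a • y ∈ range f) :
    finrank R M = finrank R M' := by
  refine le_antisymm (finrank_le_finrank_of_injective hf) ?_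
  calc finrank R M' = finrank R (range (a • LinearMap.id : M' →ₗ[R] M')) :=
        (finrank_range_of_inj (f := a • LinearMap.id) fun _ _ h ↦ ha h).symm
    _ ≤ finrank R (range f) := Submodule.finrank_mono <| by rintro _ ⟨y, rfl⟩; exact h y
    _ = finrank R M := finrank_range_of_inj hf

theorem stmt_17_general (W : Type*) [CommRing W] [IsDomain W] [IsDiscreteValuationRing W]
    (p : W) (hp : Irreducible p)
    (E E' : Type*) [AddCommGroup E] [Module W E] [AddCommGroup E'] [Module W E']
    [Module.Finite W E] [Module.Finite W E']
    (hEtf : ∀ x : E, p • x = 0 → x = 0)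
    (hE'tf : ∀ y : E', p • y = 0 → y = 0)
    (ψ : E →ₗ[W] E')
    (hgen : ∀ φ : E →ₗ[W] E', ∃ a : W, φ = a • ψ)
    (hker : ∀ x : E, ψ x = 0 → ∃ n : ℕ, p ^ n • x = 0)
    (hcoker : ∀ y : E', ∃ (n : ℕ) (x : E), p ^ n • y = ψ x) :
    Function.Bijective ψ := by
  have hpE := IsSMulRegular.of_right_eq_zero_of_smul hEtf
  have hpE' := IsSMulRegular.of_right_eq_zero_of_smul hE'tf
  have := IsDiscreteValuationRing.isTorsionFree_of_isSMulRegular hp hpE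
  have := IsDiscreteValuationRing.isTorsionFree_of_isSMulRegular hp hpE'
  have hinj : Function.Injective ψ := (injective_iff_map_eq_zero ψ).mpr fun x hx ↦ by
    obtain ⟨n, hn⟩ := hker x hx
    exact (hpE.pow n).right_eq_zero_of_smul hn
  have hcoker_torsion : IsTorsion' (E' ⧸ LinearMap.range ψ) (Submonoid.powers p) := by
    rintro ⟨y⟩
    obtain ⟨n, x, hx⟩ := hcoker y
    exact ⟨⟨p ^ n, n, rfl⟩, (Submodule.Quotient.mk_eq_zero _).mpr ⟨x, hx.symm⟩⟩
  obtain ⟨_, ⟨N, rfl⟩, hN⟩ := hcoker_torsion.exists_smul_eq_zero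
  have hrank : finrank W E = finrank W E' :=
    ψ.finrank_eq_of_smul_mem_range hinj (hpE'.pow N) fun y ↦
      (Submodule.Quotient.mk_eq_zero _).mp (hN (Submodule.Quotient.mk y))
  let e := LinearEquiv.ofFinrankEq E E' hrank
  obtain ⟨a, ha⟩ := hgen e
  refine ⟨hinj, fun y ↦ ⟨a • e.symm y, ?_⟩⟩
  rw [map_smul, ← LinearMap.smul_apply, ← ha, LinearEquiv.coe_coe, e.apply_symm_apply]

/-- Let `W` be a discrete valuation ring with uniformizer `p`, and `E`, `E'`
finitely generated `p`-torsion-free `W`-modules.  Suppose `Hom(E, E')` is free of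
rank `1` generated by `ψ`, that `ψ` is not divisible by `p`, and that `ψ ⊗ ℚ` is
an isomorphism (the kernel of `ψ` is killed by a power of `p`, and its cokernel
is killed by powers of `p`).  Then `ψ : E → E'` is itself an isomorphism; i.e.
any isomorphism `φ : ℚ ⊗ E ≅ ℚ ⊗ E'` restricts, after rescaling by `p^{-n}`, to
an isomorphism `E ≅ E'`. -/
theorem stmt_17 (W : Type*) [CommRing W] [IsDomain W] [IsDiscreteValuationRing W]
    (p : W) (hp : Irreducible p)
    (E E' : Type*) [AddCommGroup E] [Module W E] [AddCommGroup E'] [Module W E']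
    [Module.Finite W E] [Module.Finite W E']
    (hEtf : ∀ x : E, p • x = 0 → x = 0)
    (hE'tf : ∀ y : E', p • y = 0 → y = 0)
    (ψ : E →ₗ[W] E')
    (hgen : ∀ φ : E →ₗ[W] E', ∃ a : W, φ = a • ψ)
    (hnotdiv : ¬ ∃ φ : E →ₗ[W] E', ψ = p • φ)
    (hker : ∀ x : E, ψ x = 0 → ∃ n : ℕ, p ^ n • x = 0)
    (hcoker : ∀ y : E', ∃ (n : ℕ) (x : E), p ^ n • y = ψ x) :
    Function.Bijective ψ :=
  stmt_17_general W p hp E E' hEtf hE'tf ψ hgen hker hcoker
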